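/- Let z₁(x) = 2·exp(1 − 1/(1 − (x/π)²)) − 1 for |x| < π, extended by z₁(±π) = −1 and with all one-sided derivatives z₁^{(k)}(±π) = 0 for k ≥ 1, and let ε = 1/128. Then for every k ∈ {0, 1, 2, 3, 4, 5}: (i) for every x ∈ [−π, −π + ε], z₁^{(k)}(x) lies in the closed interval with endpoints z₁^{(k)}(−π) and z₁^{(k)}(−π + ε); and (ii) for every x ∈ [π − ε, π], z₁^{(k)}(x) lies in the closed interval with endpoints z₁^{(k)}(π − ε) and z₁^{(k)}(π). -/

import Mathlib

/-
On `|x| < π` we have `z₁(x) = 2e·ψ(x/π) - 1` with `ψ(u) = exp(-1/(1 - u²))`, and by induction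
`ψ⁽ᵏ⁾(u) = ψ(u) Pₖ(u) / (1 - u²)^(2k)` for polynomials with `P₀ = 1` and
`Pₖ₊₁ = Pₖ' (1 - u²)² - 2u Pₖ + 4k u (1 - u²) Pₖ`. So `z₁⁽ᵏ⁾` is monotone on `[-π, -π + ε]` as soon
as `Pₖ₊₁ ≥ 0` on `[-1, -1 + ε/π] ⊆ [-1, -1 + 1/400]`. Since `Pₖ(-1) = 2ᵏ`, for `k ≤ 6` the Taylor
expansion of `Pₖ` at `-1` shows that its constant term dominates there.
The right endpoint follows by reflection, `z₁` being even.
-/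

open Real

/-- `z₁(x) = 2 exp(1 - 1/(1-(x/π)²)) - 1` for `|x| < π`, extended by `-1` outside;
this extension is smooth, and its (iterated) derivatives at `±π` coincide with the
one-sided derivatives, which all vanish. -/
noncomputable def z1fun (x : ℝ) : ℝ :=
  if x ^ 2 < π ^ 2 then 2 * Real.exp (1 - 1 / (1 - (x / π) ^ 2)) - 1 else -1

open Polynomial Set

def hornerEval (v : ℝ) : List ℝ → ℝ
  | [] => 0
  | a :: as => a + v * hornerEval v as

theorem abs_hornerEval_le {v δ : ℝ} (hv : |v| ≤ δ) :
    ∀ as : List ℝ, |hornerEval v as| ≤ hornerEval δ (as.map abs)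
  | [] => by simp [hornerEval]
  | a :: as => by
    calc |a + v * hornerEval v as| ≤ |a| + |v| * |hornerEval v as| := by
          rw [← abs_mul]; exact abs_add_le _ _
      _ ≤ |a| + δ * hornerEval δ (as.map abs) := by
          gcongr
          · exact (abs_nonneg v).trans hv
          · exact abs_hornerEval_le hv as

theorem hornerEval_cons_nonneg {v δ a : ℝ} {as : List ℝ} (hv : |v| ≤ δ)
    (h : δ * hornerEval δ (as.map abs) ≤ a) : 0 ≤ hornerEval v (a :: as) := by
  have hbound : |v * hornerEval v as| ≤ δ * hornerEval δ (as.map abs) := by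
    rw [abs_mul]
    exact mul_le_mul hv (abs_hornerEval_le hv as) (abs_nonneg _) ((abs_nonneg v).trans hv)
  rw [hornerEval]
  linarith [neg_abs_le (v * hornerEval v as)]

theorem mem_uIcc_of_deriv_nonneg {f : ℝ → ℝ} {a b x : ℝ} (hf : ContinuousOn f (Icc a b))
    (hf' : DifferentiableOn ℝ f (Ioo a b)) (h : ∀ y ∈ Ioo a b, 0 ≤ deriv f y)
    (hx : x ∈ Icc a b) : f x ∈ uIcc (f a) (f b) :=
  Icc_subset_uIcc <| (monotoneOn_of_deriv_nonneg (convex_Icc a b) hf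
    (by rwa [interior_Icc]) (by rwa [interior_Icc])).mapsTo_Icc hx

theorem Function.Even.iteratedDeriv_mem_uIcc {f : ℝ → ℝ} (hf : f.Even) (k : ℕ) {a b x : ℝ}
    (h : iteratedDeriv k f (-x) ∈ uIcc (iteratedDeriv k f a) (iteratedDeriv k f b)) :
    iteratedDeriv k f x ∈ uIcc (iteratedDeriv k f (-b)) (iteratedDeriv k f (-a)) := by
  have hsym (y : ℝ) : iteratedDeriv k f y = (-1) ^ k * iteratedDeriv k f (-y) := by
    simpa [show (fun x => f (-x)) = f from funext hf] using iteratedDeriv_comp_neg k f y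
  rw [hsym x, hsym (-a), hsym (-b), neg_neg, neg_neg, ← image_const_mul_uIcc, uIcc_comm]
  exact mem_image_of_mem _ h

noncomputable def stdBump (u : ℝ) : ℝ := expNegInvGlue (1 - u ^ 2)

noncomputable def bumpPolyStep (n : ℕ) (p : ℝ[X]) : ℝ[X] :=
  derivative p * (1 - X ^ 2) ^ 2 - 2 * X * p + 2 * (n : ℝ[X]) * X * (1 - X ^ 2) * p

noncomputable def bumpPoly : ℕ → ℝ[X]
  | 0 => 1
  | k + 1 => bumpPolyStep (2 * k) (bumpPoly k)

theorem hasDerivAt_exp_mul_eval_div (p : ℝ[X]) (n : ℕ) {u : ℝ} (hu : 1 - u ^ 2 ≠ 0) :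
    HasDerivAt (fun u => exp (-(1 - u ^ 2)⁻¹) * p.eval u / (1 - u ^ 2) ^ n)
      (exp (-(1 - u ^ 2)⁻¹) * (bumpPolyStep n p).eval u / (1 - u ^ 2) ^ (n + 2)) u := by
  have hq : HasDerivAt (fun u : ℝ => 1 - u ^ 2) (-(2 * u)) u := by
    simpa using (hasDerivAt_pow 2 u).const_sub 1
  have h : HasDerivAt (fun u => exp (-(1 - u ^ 2)⁻¹) * p.eval u / (1 - u ^ 2) ^ n) _ u :=
    ((hq.fun_inv hu).fun_neg.exp.mul (p.hasDerivAt u)).fun_div (hq.fun_pow n) (pow_ne_zero n hu)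
  refine h.congr_deriv ?_
  -- `HasDerivAt.fun_pow` leaves an exponent `n - 1` in ℕ
  obtain _ | m := n <;>
  · simp only [bumpPolyStep, eval_add, eval_sub, eval_mul, eval_pow, eval_X, eval_one, eval_ofNat,
      eval_natCast, Pi.mul_apply, Nat.cast_add, Nat.cast_one, add_tsub_cancel_right]
    field_simp
    ring

theorem stdBump_eq {u : ℝ} (hu : u ^ 2 < 1) : stdBump u = exp (-(1 - u ^ 2)⁻¹) := by
  rw [stdBump, expNegInvGlue, if_neg (by linarith)]

theorem contDiff_stdBump {n : ℕ∞} : ContDiff ℝ n stdBump :=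
  expNegInvGlue.contDiff.comp (contDiff_const.sub (contDiff_id.pow 2))

theorem iteratedDeriv_stdBump (k : ℕ) {u : ℝ} (hu : u ^ 2 < 1) :
    iteratedDeriv k stdBump u =
      exp (-(1 - u ^ 2)⁻¹) * (bumpPoly k).eval u / (1 - u ^ 2) ^ (2 * k) := by
  induction k generalizing u with
  | zero => simp [stdBump_eq hu, bumpPoly]
  | succ k ih =>
    have hnhds : iteratedDeriv k stdBump =ᶠ[nhds u]
        fun u => exp (-(1 - u ^ 2)⁻¹) * (bumpPoly k).eval u / (1 - u ^ 2) ^ (2 * k) := by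
      filter_upwards [(isOpen_lt (continuous_pow 2) continuous_const).mem_nhds hu] with v hv
      exact ih hv
    rw [iteratedDeriv_succ, hnhds.deriv_eq,
      (hasDerivAt_exp_mul_eval_div _ _ (by linarith)).deriv, bumpPoly]
    rfl

theorem bumpPoly_one : bumpPoly 1 = -2 * X := by
  simp [bumpPoly, bumpPolyStep]

theorem bumpPoly_two : bumpPoly 2 = 6 * X ^ 4 - 2 := by
  rw [bumpPoly, bumpPoly_one]
  simp only [bumpPolyStep, derivative_neg, derivative_mul, derivative_ofNat, derivative_X]
  ring

theorem bumpPoly_three : bumpPoly 3 = -12 * X + 40 * X ^ 3 - 12 * X ^ 5 - 24 * X ^ 7 := by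
  rw [bumpPoly, bumpPoly_two]
  simp only [bumpPolyStep, derivative_sub, derivative_mul, derivative_ofNat, derivative_X_pow_succ,
    Nat.cast_ofNat, map_add, map_one, C_ofNat]
  ring

theorem bumpPoly_four :
    bumpPoly 4 = -12 + 24 * X ^ 2 + 232 * X ^ 4 - 528 * X ^ 6 + 180 * X ^ 8 + 120 * X ^ 10 := by
  rw [bumpPoly, bumpPoly_three]
  simp only [bumpPolyStep, derivative_sub, derivative_neg, derivative_mul, derivative_ofNat,
    derivative_X, derivative_X_pow_succ, Nat.cast_ofNat, map_add, map_one, C_ofNat]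
  ring

theorem bumpPoly_five :
    bumpPoly 5 = -120 * X + 1360 * X ^ 3 - 2112 * X ^ 5 - 2400 * X ^ 7 + 6120 * X ^ 9
      - 2160 * X ^ 11 - 720 * X ^ 13 := by
  rw [bumpPoly, bumpPoly_four]
  simp only [bumpPolyStep, derivative_sub, derivative_neg, derivative_mul, derivative_ofNat,
    derivative_X_pow_succ, Nat.cast_one, Nat.cast_ofNat, map_add, map_one, C_ofNat]
  ring

theorem bumpPoly_six :
    bumpPoly 6 = -120 + 2160 * X ^ 2 + 8040 * X ^ 4 - 56816 * X ^ 6 + 77160 * X ^ 8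
      + 7440 * X ^ 10 - 68040 * X ^ 12 + 25200 * X ^ 14 + 5040 * X ^ 16 := by
  rw [bumpPoly, bumpPoly_five]
  simp only [bumpPolyStep, derivative_sub, derivative_neg, derivative_mul, derivative_ofNat,
    derivative_X, derivative_X_pow_succ, Nat.cast_ofNat, map_add, map_one, C_ofNat]
  ring

theorem bumpPoly_eval_nonneg {k : ℕ} (hk : k ≤ 5) {u : ℝ} (hu : |u + 1| ≤ 1 / 400) :
    0 ≤ (bumpPoly (k + 1)).eval u := by
  interval_cases k
  · rw [show (bumpPoly 1).eval u = hornerEval (u + 1) [2, -2] by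
      simp only [bumpPoly_one, hornerEval, eval_neg, eval_mul, eval_X, eval_ofNat]
      ring]
    exact hornerEval_cons_nonneg hu (by norm_num [hornerEval])
  · rw [show (bumpPoly 2).eval u = hornerEval (u + 1) [4, -24, 36, -24, 6] by
      simp only [bumpPoly_two, hornerEval, eval_sub, eval_mul, eval_pow, eval_X, eval_ofNat]
      ring]
    exact hornerEval_cons_nonneg hu (by norm_num [hornerEval])
  · rw [show (bumpPoly 3).eval u =
        hornerEval (u + 1) [8, -120, 504, -920, 900, -516, 168, -24] by
      simp only [bumpPoly_three, hornerEval, eval_add, eval_sub, eval_neg, eval_mul, eval_pow,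
        eval_X, eval_ofNat]
      ring]
    exact hornerEval_cons_nonneg hu (by norm_num [hornerEval])
  · rw [show (bumpPoly 4).eval u = hornerEval (u + 1)
        [16, -448, 3936, -14848, 30112, -37152, 29712, -15840, 5580, -1200, 120] by
      simp only [bumpPoly_four, hornerEval, eval_add, eval_sub, eval_neg, eval_mul, eval_pow,
        eval_X, eval_ofNat]
      ring]
    exact hornerEval_cons_nonneg hu (by norm_num [hornerEval])
  · rw [show (bumpPoly 5).eval u = hornerEval (u + 1)
        [32, -1440, 22080, -152000, 551040, -1205952, 1736160, -1730400, 1227960, -627480,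
          229680, -58320, 9360, -720] by
      simp only [bumpPoly_five, hornerEval, eval_add, eval_sub, eval_neg, eval_mul, eval_pow,
        eval_X, eval_ofNat]
      ring]
    exact hornerEval_cons_nonneg hu (by norm_num [hornerEval])
  · rw [show (bumpPoly 6).eval u = hornerEval (u + 1)
        [64, -4224, 100800, -1136000, 6837600, -24432384, 56833024, -91766400, 107272560,
          -93213600, 61102320, -30371040, 11397960, -3175200, 630000, -80640, 5040] by
      simp only [bumpPoly_six, hornerEval, eval_add, eval_sub, eval_neg, eval_mul, eval_pow,
        eval_X, eval_ofNat]
      ring]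
    exact hornerEval_cons_nonneg hu (by norm_num [hornerEval])

theorem z1fun_eq : z1fun = fun x => -1 + 2 * exp 1 * stdBump (π⁻¹ * x) := by
  funext x
  have hsq : (π⁻¹ * x) ^ 2 = x ^ 2 / π ^ 2 := by field_simp
  rw [z1fun, stdBump, expNegInvGlue]
  by_cases hx : x ^ 2 < π ^ 2
  · have hu : 0 < 1 - (π⁻¹ * x) ^ 2 := by
      rw [hsq, sub_pos, div_lt_one (by positivity)]; exact hx
    rw [if_pos hx, if_neg hu.not_ge, sub_eq_add_neg 1, exp_add, one_div, div_eq_inv_mul]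
    ring
  · have hu : 1 - (π⁻¹ * x) ^ 2 ≤ 0 := by
      rw [hsq, sub_nonpos, one_le_div (by positivity)]; exact not_lt.1 hx
    rw [if_neg hx, if_pos hu]
    ring

theorem contDiff_z1fun {n : ℕ∞} : ContDiff ℝ n z1fun := by
  rw [z1fun_eq]
  exact contDiff_const.add
    (contDiff_const.mul (contDiff_stdBump.comp (contDiff_const.mul contDiff_id)))

theorem z1fun_even : z1fun.Even := fun x => by
  simp [z1fun, neg_div]

theorem iteratedDeriv_succ_z1fun (k : ℕ) (x : ℝ) :
    iteratedDeriv (k + 1) z1fun x =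
      2 * exp 1 * (π⁻¹ ^ (k + 1) * iteratedDeriv (k + 1) stdBump (π⁻¹ * x)) := by
  rw [z1fun_eq, iteratedDeriv_const_add k.succ_pos, iteratedDeriv_const_mul_field,
    iteratedDeriv_comp_const_mul contDiff_stdBump]

theorem iteratedDeriv_succ_z1fun_nonneg {k : ℕ} (hk : k ≤ 5) {x : ℝ}
    (hx : x ∈ Ioo (-π) (-π + 1 / 128)) : 0 ≤ iteratedDeriv (k + 1) z1fun x := by
  obtain ⟨hx₁, hx₂⟩ := hx
  have hπ : 3.14 < π := pi_gt_d2
  have hu₁ : 0 < π⁻¹ * x + 1 := by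
    rw [← mul_lt_mul_iff_of_pos_left pi_pos]; field_simp; linarith
  have hu₂ : π⁻¹ * x + 1 ≤ 1 / 400 := by
    rw [← mul_le_mul_iff_of_pos_left pi_pos]; field_simp; linarith
  have hsq : (π⁻¹ * x) ^ 2 < 1 := by nlinarith
  have hP := bumpPoly_eval_nonneg hk (abs_le.2 ⟨by linarith, hu₂⟩)
  have hq : 0 < 1 - (π⁻¹ * x) ^ 2 := by linarith
  rw [iteratedDeriv_succ_z1fun, iteratedDeriv_stdBump _ hsq]
  positivity

/-- Monotone enclosure of the derivatives of `z₁` of order `k = 0, …, 5` near the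
endpoints: on `[-π, -π + ε]` the value `z₁^{(k)}(x)` lies between `z₁^{(k)}(-π)` and
`z₁^{(k)}(-π + ε)`, and on `[π - ε, π]` it lies between `z₁^{(k)}(π - ε)` and
`z₁^{(k)}(π)`, where `ε = 1/128`. -/
theorem z1_derivatives_endpoint_enclosure :
    ∀ k : ℕ, k ≤ 5 →
      (∀ x ∈ Set.Icc (-π) (-π + 1 / 128),
        iteratedDeriv k z1fun x ∈
          Set.uIcc (iteratedDeriv k z1fun (-π)) (iteratedDeriv k z1fun (-π + 1 / 128))) ∧
      (∀ x ∈ Set.Icc (π - 1 / 128) π,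
        iteratedDeriv k z1fun x ∈
          Set.uIcc (iteratedDeriv k z1fun (π - 1 / 128)) (iteratedDeriv k z1fun π)) := by
  intro k hk
  have hz : ContDiff ℝ (⊤ : ℕ∞) z1fun := contDiff_z1fun
  have left (x : ℝ) (hx : x ∈ Icc (-π) (-π + 1 / 128)) :
      iteratedDeriv k z1fun x ∈
        uIcc (iteratedDeriv k z1fun (-π)) (iteratedDeriv k z1fun (-π + 1 / 128)) :=
    mem_uIcc_of_deriv_nonneg
      (hz.continuous_iteratedDeriv k (by exact_mod_cast le_top)).continuousOn
      (hz.differentiable_iteratedDeriv k (by exact_mod_cast ENat.natCast_lt_top k)).differentiableOn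
      (fun y hy => by rw [← iteratedDeriv_succ]; exact iteratedDeriv_succ_z1fun_nonneg hk hy) hx
  refine ⟨left, fun x hx => ?_⟩
  have h := z1fun_even.iteratedDeriv_mem_uIcc k
    (left (-x) ⟨by linarith [hx.2], by linarith [hx.1]⟩)
  rwa [neg_neg, show -(-π + 1 / 128) = π - 1 / 128 by ring] at h
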